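/- For the Lie algebra g_C with basis v_1,...,v_n, v̄_1,...,v̄_n and ∂̄ the Lie algebroid differential determined by ∂̄v_1 = -(1/2) v_2 ∧ ω̄_1, ∂̄v_k = -v_{k+1} ∧ ω̄_1 (2≤k≤n-1), ∂̄v_n = 0: for n ≥ 5, the bivector Π_n = v_{n-3} ∧ v_n - v_{n-2} ∧ v_{n-1} satisfies ∂̄Π_n = 0, so it defines an invariant holomorphic Poisson structure. -/
import Mathlib


/-- The complexification `g_ℂ` of the `2n`-dimensional nilmanifold Lie algebra:
`x`-coordinates and `y`-coordinates, now with complex coefficients. -/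
abbrev nilVC (n : ℕ) := (Fin n → ℂ) × (Fin n → ℂ)

/-- The complex-bilinear extension of the bracket `[x_1,y_1] = y_2`,
`[x_1,x_k] = [y_1,y_k] = x_{k+1}`, `[x_1,y_k] = -[y_1,x_k] = y_{k+1}` (`2 ≤ k ≤ n-1`). -/
def nilBrC {n : ℕ} (u v : nilVC n) : nilVC n :=
  (fun i =>
    if h : 2 ≤ (i : ℕ) then
      u.1 ⟨0, by have := i.isLt; omega⟩ * v.1 ⟨(i : ℕ) - 1, by have := i.isLt; omega⟩
        - v.1 ⟨0, by have := i.isLt; omega⟩ * u.1 ⟨(i : ℕ) - 1, by have := i.isLt; omega⟩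
        + u.2 ⟨0, by have := i.isLt; omega⟩ * v.2 ⟨(i : ℕ) - 1, by have := i.isLt; omega⟩
        - v.2 ⟨0, by have := i.isLt; omega⟩ * u.2 ⟨(i : ℕ) - 1, by have := i.isLt; omega⟩
    else 0,
   fun i =>
    if h1 : (i : ℕ) = 1 then
      u.1 ⟨0, by have := i.isLt; omega⟩ * v.2 ⟨0, by have := i.isLt; omega⟩
        - v.1 ⟨0, by have := i.isLt; omega⟩ * u.2 ⟨0, by have := i.isLt; omega⟩
    else if h : 2 ≤ (i : ℕ) then
      u.1 ⟨0, by have := i.isLt; omega⟩ * v.2 ⟨(i : ℕ) - 1, by have := i.isLt; omega⟩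
        - v.1 ⟨0, by have := i.isLt; omega⟩ * u.2 ⟨(i : ℕ) - 1, by have := i.isLt; omega⟩
        - u.2 ⟨0, by have := i.isLt; omega⟩ * v.1 ⟨(i : ℕ) - 1, by have := i.isLt; omega⟩
        + v.2 ⟨0, by have := i.isLt; omega⟩ * u.1 ⟨(i : ℕ) - 1, by have := i.isLt; omega⟩
    else 0)

/-- The basis vector `x_{j+1}` of `g_ℂ` (`0`-based index `j`). -/
def ex {n : ℕ} (j : Fin n) : nilVC n := (Pi.single j 1, 0)

/-- The basis vector `y_{j+1}` of `g_ℂ` (`0`-based index `j`). -/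
def ey {n : ℕ} (j : Fin n) : nilVC n := (0, Pi.single j 1)

/-- `v_{j+1} = (x_{j+1} - i y_{j+1})/2` (`0`-based index `j`). -/
noncomputable def vC {n : ℕ} (j : Fin n) : nilVC n := (1 / 2 : ℂ) • (ex j - Complex.I • ey j)

/-- `v̄_{j+1} = (x_{j+1} + i y_{j+1})/2` (`0`-based index `j`). -/
noncomputable def vbC {n : ℕ} (j : Fin n) : nilVC n := (1 / 2 : ℂ) • (ex j + Complex.I • ey j)

/-- The complex-linear extension `J_ℂ` of `J` to `g_ℂ`. -/
def nilJC {n : ℕ} (u : nilVC n) : nilVC n := (-u.2, u.1)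

/-- The projection of `g_ℂ` onto `g^{1,0}`, `w ↦ (w - i J_ℂ w)/2`. -/
noncomputable def p10 {n : ℕ} (w : nilVC n) : nilVC n :=
  (1 / 2 : ℂ) • (w - Complex.I • nilJC w)

/-- The `ω̄_{j+1}`-component of the Lie algebroid differential `∂̄` on `(1,0)`-vectors:
`∂̄ W = Σ_j [W, v̄_{j+1}]^{1,0} ∧ ω̄_{j+1}`. -/
noncomputable def dbarCoeff {n : ℕ} (j : Fin n) (w : nilVC n) : nilVC n :=
  p10 (nilBrC w (vbC j))
lemma dbar_mid {n : ℕ} (k : ℕ) (hk1 : 1 ≤ k) (hk : k + 1 < n) :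
    dbarCoeff (⟨0, by omega⟩ : Fin n) (vC ⟨k, by omega⟩) = - vC ⟨k + 1, hk⟩ := by
  have h1 : nilBrC (vC (⟨k, by omega⟩ : Fin n)) (vbC ⟨0, by omega⟩) =
      ((fun i : Fin n => if (i : ℕ) = k + 1 then (-(1/2) : ℂ) else 0),
       (fun i : Fin n => if (i : ℕ) = k + 1 then (Complex.I/2 : ℂ) else 0)) := by
    refine Prod.ext ?_ ?_ <;> funext i <;>
      simp [nilBrC, vC, vbC, ex, ey, Pi.single_apply, Fin.ext_iff] <;>
      split_ifs <;>
      first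
        | omega
        | (ring_nf; try simp [Complex.I_sq]; try ring_nf)
  refine Prod.ext ?_ ?_ <;> funext i <;>
    simp only [dbarCoeff, h1, p10, nilJC] <;>
    simp [vC, ex, ey, Pi.single_apply, Fin.ext_iff] <;>
    split_ifs <;> (ring_nf; try simp [Complex.I_sq]; try ring_nf)

lemma dbar_ne {n : ℕ} (k j : Fin n) (hk : (k : ℕ) ≠ 0) (hj : (j : ℕ) ≠ 0) :
    dbarCoeff j (vC k) = 0 := by
  have h1 : nilBrC (vC k) (vbC j) = 0 := by
    refine Prod.ext ?_ ?_ <;> funext i <;>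
      simp [nilBrC, vC, vbC, ex, ey, Pi.single_apply, Fin.ext_iff] <;>
      split_ifs <;> first | omega | (ring_nf; try simp [Complex.I_sq]; try ring_nf)
  simp [dbarCoeff, h1, p10, nilJC, Prod.ext_iff]

lemma dbar_top {n : ℕ} (hn : 1 ≤ n) :
    dbarCoeff (⟨0, by omega⟩ : Fin n) (vC ⟨n - 1, by omega⟩) = 0 := by
  have h1 : nilBrC (vC (⟨n - 1, by omega⟩ : Fin n)) (vbC ⟨0, by omega⟩) = 0 := by
    refine Prod.ext ?_ ?_ <;> funext i <;>
      have := i.isLt <;>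
      simp [nilBrC, vC, vbC, ex, ey, Pi.single_apply, Fin.ext_iff] <;>
      split_ifs <;> first | omega | (ring_nf; try simp [Complex.I_sq]; try ring_nf)
  simp [dbarCoeff, h1, p10, nilJC, Prod.ext_iff]

open ExteriorAlgebra in
/-- for `n ≥ 5`, the bivector `Π_n = v_{n-3} ∧ v_n - v_{n-2} ∧ v_{n-1}`
satisfies `∂̄ Π_n = 0` (each `ω̄_j`-component of `∂̄ Π_n`, computed by the derivation
rule, vanishes in `Λ² g^{1,0}`), so it defines an invariant holomorphic Poisson
structure. -/
theorem Pi_n_holomorphic (n : ℕ) (hn : 5 ≤ n) :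
    ∀ j : Fin n,
      (ι ℂ (dbarCoeff j (vC (n := n) ⟨n - 4, by omega⟩)) * ι ℂ (vC ⟨n - 1, by omega⟩)
          + ι ℂ (vC (n := n) ⟨n - 4, by omega⟩) * ι ℂ (dbarCoeff j (vC ⟨n - 1, by omega⟩)))
        - (ι ℂ (dbarCoeff j (vC (n := n) ⟨n - 3, by omega⟩)) * ι ℂ (vC ⟨n - 2, by omega⟩)
          + ι ℂ (vC (n := n) ⟨n - 3, by omega⟩) * ι ℂ (dbarCoeff j (vC ⟨n - 2, by omega⟩)))
        = 0 := by
  intro j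
  obtain ⟨jv, hjv⟩ := j
  by_cases hj : jv = 0
  · subst hj
    have ha : dbarCoeff (⟨0, hjv⟩ : Fin n) (vC ⟨n - 4, by omega⟩)
        = - vC ⟨n - 3, by omega⟩ := by
      have h2 : (⟨n - 4 + 1, by omega⟩ : Fin n) = ⟨n - 3, by omega⟩ := by
        ext; simp; omega
      rw [dbar_mid (n := n) (n - 4) (by omega) (by omega), h2]
    have hc : dbarCoeff (⟨0, hjv⟩ : Fin n) (vC ⟨n - 3, by omega⟩)
        = - vC ⟨n - 2, by omega⟩ := by
      have h2 : (⟨n - 3 + 1, by omega⟩ : Fin n) = ⟨n - 2, by omega⟩ := by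
        ext; simp; omega
      rw [dbar_mid (n := n) (n - 3) (by omega) (by omega), h2]
    have hd : dbarCoeff (⟨0, hjv⟩ : Fin n) (vC ⟨n - 2, by omega⟩)
        = - vC ⟨n - 1, by omega⟩ := by
      have h2 : (⟨n - 2 + 1, by omega⟩ : Fin n) = ⟨n - 1, by omega⟩ := by
        ext; simp; omega
      rw [dbar_mid (n := n) (n - 2) (by omega) (by omega), h2]
    have hb : dbarCoeff (⟨0, hjv⟩ : Fin n) (vC ⟨n - 1, by omega⟩) = 0 :=
      dbar_top (by omega)
    rw [ha, hb, hc, hd]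
    simp only [map_neg, map_zero, neg_mul, mul_neg, mul_zero, zero_mul, add_zero, neg_neg]
    rw [ι_sq_zero]
    simp
  · have ha := dbar_ne (⟨n - 4, by omega⟩ : Fin n) ⟨jv, hjv⟩ (by simp; omega) hj
    have hb := dbar_ne (⟨n - 1, by omega⟩ : Fin n) ⟨jv, hjv⟩ (by simp; omega) hj
    have hc := dbar_ne (⟨n - 3, by omega⟩ : Fin n) ⟨jv, hjv⟩ (by simp; omega) hj
    have hd := dbar_ne (⟨n - 2, by omega⟩ : Fin n) ⟨jv, hjv⟩ (by simp; omega) hj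
    rw [ha, hb, hc, hd]
    simp
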